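/- arXiv:1206.1277 — 3 statements merged into one kernel-verified Lean document; each statement's English description precedes it below -/
import Mathlib

section
/- Let f : X → Y be continuous, g : Y → X continuous, and G : Y × I → Y a homotopy from f ∘ g to the identity of Y (G(y,0) = f(g(y)), G(y,1) = y). Then the map H₂ : M_f × I → M_f defined by ([x,t],s) ↦ [G(f(x),1-s)] and ([y],s) ↦ [G(y,1-s)] is well defined and continuous, and is a homotopy from the retraction r ([x,t] ↦ [x,0], [y] ↦ [y]) to the map h given by [x,t] ↦ [g(f(x)),0], [y] ↦ [g(y),0]. -/
open unitInterval

/-- The relation generating the mapping cylinder identification `(x,0) ∼ f x`. -/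
def cylRel {X Y : Type*} (f : X → Y) : (X × I) ⊕ Y → (X × I) ⊕ Y → Prop :=
  fun a b => ∃ x : X, a = Sum.inl (x, 0) ∧ b = Sum.inr (f x)

/-- The mapping cylinder of `f`, as a quotient of `(X × I) ⊕ Y`. -/
abbrev Cyl {X Y : Type*} (f : X → Y) : Type _ := Quot (cylRel f)

/-- The quotient map onto the mapping cylinder. -/
def cylQ {X Y : Type*} (f : X → Y) : (X × I) ⊕ Y → Cyl f := Quot.mk _

/-!
`H₂` factors as `M_f × I → Y × I → Y → M_f`: collapse the cylinder onto its base
(`[x,t] ↦ f x`, `[y] ↦ y`) and flip time, apply `G`, include `Y` back. Well-definedness and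
continuity then come from the factorisation, and the endpoint values from `G(-,1) = id`,
`G(-,0) = f ∘ g` and the identification `[x,0] = [f x]`.
-/

theorem cylQ_inl_zero {X Y : Type*} (f : X → Y) (x : X) :
    cylQ f (Sum.inl (x, 0)) = cylQ f (Sum.inr (f x)) :=
  Quot.sound ⟨x, rfl, rfl⟩

section MappingCylinder

variable {X Y : Type*} [TopologicalSpace X] [TopologicalSpace Y] (f : X → Y)

def cylInr : C(Y, Cyl f) :=
  ⟨fun y => cylQ f (Sum.inr y), continuous_quot_mk.comp continuous_inr⟩

def cylCollapse (hf : Continuous f) : C(Cyl f, Y) :=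
  ⟨Quot.lift (Sum.elim (fun p => f p.1) id) (by rintro _ _ ⟨x, rfl, rfl⟩; rfl),
    continuous_quot_lift _ (continuous_sumElim.mpr ⟨hf.comp continuous_fst, continuous_id⟩)⟩

def cylCollapseHomotopy (hf : Continuous f) (G : C(Y × I, Y)) : C(Cyl f × I, Cyl f) :=
  (cylInr f).comp (G.comp ((cylCollapse f hf).prodMap ⟨σ, continuous_symm⟩))

variable {f}

@[simp]
theorem cylCollapseHomotopy_inl (hf : Continuous f) (G : C(Y × I, Y)) (x : X) (t s : I) :
    cylCollapseHomotopy f hf G (cylQ f (Sum.inl (x, t)), s) = cylQ f (Sum.inr (G (f x, σ s))) :=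
  rfl

@[simp]
theorem cylCollapseHomotopy_inr (hf : Continuous f) (G : C(Y × I, Y)) (y : Y) (s : I) :
    cylCollapseHomotopy f hf G (cylQ f (Sum.inr y), s) = cylQ f (Sum.inr (G (y, σ s))) :=
  rfl

end MappingCylinder

theorem H2_homotopy_general {X Y : Type*} [TopologicalSpace X] [TopologicalSpace Y]
    (f : X → Y) (g : Y → X) (G : Y × I → Y)
    (hf : Continuous f) (hG : Continuous G)
    (hG0 : ∀ y, G (y, 0) = f (g y)) (hG1 : ∀ y, G (y, 1) = y) :
    ∃ H : C(Cyl f × I, Cyl f),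
      (∀ (x : X) (t s : I), H (cylQ f (Sum.inl (x, t)), s) = cylQ f (Sum.inr (G (f x, σ s)))) ∧
      (∀ (y : Y) (s : I), H (cylQ f (Sum.inr y), s) = cylQ f (Sum.inr (G (y, σ s)))) ∧
      (∀ (x : X) (t : I), H (cylQ f (Sum.inl (x, t)), 0) = cylQ f (Sum.inl (x, 0))) ∧
      (∀ y : Y, H (cylQ f (Sum.inr y), 0) = cylQ f (Sum.inr y)) ∧
      (∀ (x : X) (t : I), H (cylQ f (Sum.inl (x, t)), 1) = cylQ f (Sum.inl (g (f x), 0))) ∧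
      (∀ y : Y, H (cylQ f (Sum.inr y), 1) = cylQ f (Sum.inl (g y, 0))) := by
  refine ⟨cylCollapseHomotopy f hf ⟨G, hG⟩, fun _ _ _ => rfl, fun _ _ => rfl, ?_, ?_, ?_, ?_⟩ <;>
    intros <;>
    simp [cylQ_inl_zero, hG0, hG1]

/-- given a homotopy `G` from `f ∘ g` to `1_Y`, the map
`H₂ : M_f × I → M_f`, `([x,t],s) ↦ [G(f x, 1-s)]`, `([y],s) ↦ [G(y, 1-s)]`,
is well defined and continuous, and is a homotopy from the retraction `r`
(`[x,t] ↦ [x,0]`, `[y] ↦ [y]`) to the map `h` (`[x,t] ↦ [g(f x),0]`,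
`[y] ↦ [g y, 0]`). -/
theorem H2_homotopy {X Y : Type*} [TopologicalSpace X] [TopologicalSpace Y]
    (f : X → Y) (g : Y → X) (G : Y × I → Y)
    (hf : Continuous f) (hg : Continuous g) (hG : Continuous G)
    (hG0 : ∀ y, G (y, 0) = f (g y)) (hG1 : ∀ y, G (y, 1) = y) :
    ∃ H : C(Cyl f × I, Cyl f),
      (∀ (x : X) (t s : I), H (cylQ f (Sum.inl (x, t)), s) = cylQ f (Sum.inr (G (f x, σ s)))) ∧
      (∀ (y : Y) (s : I), H (cylQ f (Sum.inr y), s) = cylQ f (Sum.inr (G (y, σ s)))) ∧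
      (∀ (x : X) (t : I), H (cylQ f (Sum.inl (x, t)), 0) = cylQ f (Sum.inl (x, 0))) ∧
      (∀ y : Y, H (cylQ f (Sum.inr y), 0) = cylQ f (Sum.inr y)) ∧
      (∀ (x : X) (t : I), H (cylQ f (Sum.inl (x, t)), 1) = cylQ f (Sum.inl (g (f x), 0))) ∧
      (∀ y : Y, H (cylQ f (Sum.inr y), 1) = cylQ f (Sum.inl (g y, 0))) :=
  H2_homotopy_general f g G hf hG hG0 hG1
end

section
/- Let f : X → Y be continuous, g : Y → X continuous, and F : X × I → X a homotopy from g ∘ f to the identity of X. Then the map H₃ : M_f × I → M_f defined by ([x,t],s) ↦ [F(x,st), s] and ([y],s) ↦ [g(y), s] is well defined and continuous, and is a homotopy from the map h ([x,t] ↦ [g(f(x)),0], [y] ↦ [g(y),0]) to the retraction r' given by [x,t] ↦ [F(x,t),1], [y] ↦ [g(y),1]. -/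
open unitInterval

/-! The formula `([x,t],s) ↦ [F(x,st), s]`, `([y],s) ↦ [g y, s]` respects the identification
`(x,0) ∼ f x` because `F(x, s·0) = F(x,0) = g(f x)`. Continuity is checked on representatives:
since `I` is locally compact, the product of the quotient map `(X × I) ⊕ Y → M_f` with `id_I` is
again a quotient map. -/

open Function

theorem continuous_quot_lift_prod {α β Z : Type*} [TopologicalSpace α] [TopologicalSpace β]
    [TopologicalSpace Z] [LocallyCompactSpace β] {r : α → α → Prop} (φ : α → β → Z)
    (hφ : ∀ b a a', r a a' → φ a b = φ a' b) (hc : Continuous (uncurry φ)) :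
    Continuous fun p : Quot r × β => Quot.lift (φ · p.2) (hφ p.2) p.1 :=
  isQuotientMap_quot_mk.continuous_lift_prod_left hc

theorem continuous_uncurry_sumElim {α β γ Z : Type*} [TopologicalSpace α] [TopologicalSpace β]
    [TopologicalSpace γ] [TopologicalSpace Z] {φ : α → γ → Z} {ψ : β → γ → Z}
    (hφ : Continuous (uncurry φ)) (hψ : Continuous (uncurry ψ)) :
    Continuous (uncurry (Sum.elim φ ψ)) := by
  have h : uncurry (Sum.elim φ ψ) = Sum.elim (uncurry φ) (uncurry ψ) ∘ Homeomorph.sumProdDistrib :=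
    funext fun | (.inl _, _) => rfl | (.inr _, _) => rfl
  rw [h]
  exact (hφ.sumElim hψ).comp Homeomorph.sumProdDistrib.continuous

section MappingCylinder

variable {X Y : Type*} (f : X → Y) (g : Y → X) (F : X × I → X)

def cylH3Rep : (X × I) ⊕ Y → I → Cyl f :=
  Sum.elim (fun p s => cylQ f (.inl (F (p.1, s * p.2), s))) (fun y s => cylQ f (.inl (g y, s)))

variable {f g F}

theorem cylH3Rep_eq_of_cylRel (hF0 : ∀ x, F (x, 0) = g (f x)) (s : I) (a b : (X × I) ⊕ Y)
    (hab : cylRel f a b) : cylH3Rep f g F a s = cylH3Rep f g F b s := by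
  obtain ⟨x, rfl, rfl⟩ := hab
  simp only [cylH3Rep, Sum.elim_inl, Sum.elim_inr, mul_zero, hF0]

variable [TopologicalSpace X] [TopologicalSpace Y]

theorem continuous_uncurry_cylH3Rep (hg : Continuous g) (hF : Continuous F) :
    Continuous (uncurry (cylH3Rep f g F)) := by
  have hq : Continuous fun p : X × I => cylQ f (.inl p) := continuous_quot_mk.comp continuous_inl
  refine continuous_uncurry_sumElim (hq.comp ?_) (hq.comp ?_)
  · exact (hF.comp (continuous_fst.fst.prodMk (continuous_snd.mul continuous_fst.snd))).prodMk
      continuous_snd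
  · exact (hg.comp continuous_fst).prodMk continuous_snd

def cylH3 (hg : Continuous g) (hF : Continuous F) (hF0 : ∀ x, F (x, 0) = g (f x)) :
    C(Cyl f × I, Cyl f) where
  toFun p := Quot.lift (cylH3Rep f g F · p.2) (cylH3Rep_eq_of_cylRel hF0 p.2) p.1
  continuous_toFun :=
    continuous_quot_lift_prod _ (cylH3Rep_eq_of_cylRel hF0) (continuous_uncurry_cylH3Rep hg hF)

end MappingCylinder

theorem H3_homotopy_general {X Y : Type*} [TopologicalSpace X] [TopologicalSpace Y]
    (f : X → Y) (g : Y → X) (F : X × I → X)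
    (hg : Continuous g) (hF : Continuous F)
    (hF0 : ∀ x, F (x, 0) = g (f x)) :
    ∃ H : C(Cyl f × I, Cyl f),
      (∀ (x : X) (t s : I), H (cylQ f (Sum.inl (x, t)), s) = cylQ f (Sum.inl (F (x, s * t), s))) ∧
      (∀ (y : Y) (s : I), H (cylQ f (Sum.inr y), s) = cylQ f (Sum.inl (g y, s))) ∧
      (∀ (x : X) (t : I), H (cylQ f (Sum.inl (x, t)), 0) = cylQ f (Sum.inl (g (f x), 0))) ∧
      (∀ y : Y, H (cylQ f (Sum.inr y), 0) = cylQ f (Sum.inl (g y, 0))) ∧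
      (∀ (x : X) (t : I), H (cylQ f (Sum.inl (x, t)), 1) = cylQ f (Sum.inl (F (x, t), 1))) ∧
      (∀ y : Y, H (cylQ f (Sum.inr y), 1) = cylQ f (Sum.inl (g y, 1))) := by
  have hx (x : X) (t s : I) : cylH3 hg hF hF0 (cylQ f (.inl (x, t)), s) =
      cylQ f (.inl (F (x, s * t), s)) := rfl
  refine ⟨cylH3 hg hF hF0, hx, fun _ _ => rfl, fun x t => ?_, fun _ => rfl, fun x t => ?_,
    fun _ => rfl⟩
  · rw [hx, zero_mul, hF0]
  · rw [hx, one_mul]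

/-- given a homotopy `F` from `g ∘ f` to `1_X`, the map
`H₃ : M_f × I → M_f`, `([x,t],s) ↦ [F(x, st), s]`, `([y],s) ↦ [g y, s]`,
is well defined and continuous, and is a homotopy from the map `h`
(`[x,t] ↦ [g(f x),0]`, `[y] ↦ [g y,0]`) to the retraction `r'`
(`[x,t] ↦ [F(x,t),1]`, `[y] ↦ [g y,1]`). -/
theorem H3_homotopy {X Y : Type*} [TopologicalSpace X] [TopologicalSpace Y]
    (f : X → Y) (g : Y → X) (F : X × I → X)
    (hf : Continuous f) (hg : Continuous g) (hF : Continuous F)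
    (hF0 : ∀ x, F (x, 0) = g (f x)) (hF1 : ∀ x, F (x, 1) = x) :
    ∃ H : C(Cyl f × I, Cyl f),
      (∀ (x : X) (t s : I), H (cylQ f (Sum.inl (x, t)), s) = cylQ f (Sum.inl (F (x, s * t), s))) ∧
      (∀ (y : Y) (s : I), H (cylQ f (Sum.inr y), s) = cylQ f (Sum.inl (g y, s))) ∧
      (∀ (x : X) (t : I), H (cylQ f (Sum.inl (x, t)), 0) = cylQ f (Sum.inl (g (f x), 0))) ∧
      (∀ y : Y, H (cylQ f (Sum.inr y), 0) = cylQ f (Sum.inl (g y, 0))) ∧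
      (∀ (x : X) (t : I), H (cylQ f (Sum.inl (x, t)), 1) = cylQ f (Sum.inl (F (x, t), 1))) ∧
      (∀ y : Y, H (cylQ f (Sum.inr y), 1) = cylQ f (Sum.inl (g y, 1))) :=
  H3_homotopy_general f g F hg hF hF0
end

section
/- If f : X → Y is a homotopy equivalence, then the top X̃ = q(X × {1}) of the mapping cylinder M_f is a deformation retract of M_f: there is a homotopy H : M_f × I → M_f with H(p,0) = p for all p and H(p,1) ∈ X̃ for all p, and H(p,1) = p for p ∈ X̃ (deformation retraction, not necessarily strong). -/
open unitInterval

/-!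
Let `i : X → M_f` be the top inclusion, `j : Y → M_f` the base inclusion and `c : M_f → Y` the
collapse. Gluing a homotopy `L : g ∘ f ≃ id` along the cylinder and `g` on the base gives a
retraction `r` of `i`. It remains to see `id ≃ i ∘ r`: sliding the cylinder onto its base gives
`id ≃ j ∘ c`, then `j ∘ c ≃ j ∘ f ∘ g ∘ c ≃ i ∘ g ∘ c` because `f ∘ g ≃ id` and `j ∘ f ≃ i`, and
finally `g ∘ c = r ∘ j ∘ c ≃ r`.
-/

open ContinuousMap

namespace Cyl

lemma cylQ_inl_zero {X Y : Type*} (f : X → Y) (x : X) :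
    cylQ f (.inl (x, 0)) = cylQ f (.inr (f x)) :=
  Quot.sound ⟨x, rfl, rfl⟩

@[elab_as_elim]
protected lemma ind {X Y : Type*} {f : X → Y} {P : Cyl f → Prop}
    (inl : ∀ x s, P (cylQ f (.inl (x, s)))) (inr : ∀ y, P (cylQ f (.inr y))) (p : Cyl f) : P p := by
  induction p using Quot.ind with
  | mk a => rcases a with ⟨x, s⟩ | y; exacts [inl x s, inr y]

variable {X Y Z : Type*} [TopologicalSpace X] [TopologicalSpace Y] [TopologicalSpace Z]

def top (f : X → Y) : C(X, Cyl f) :=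
  ⟨fun x => cylQ f (.inl (x, 1)),
    continuous_quot_mk.comp (continuous_inl.comp (continuous_id.prodMk continuous_const))⟩

def base (f : X → Y) : C(Y, Cyl f) :=
  ⟨fun y => cylQ f (.inr y), continuous_quot_mk.comp continuous_inr⟩

def desc (f : X → Y) (φ : C(X × I, Z)) (ψ : C(Y, Z)) (h : ∀ x, φ (x, 0) = ψ (f x)) :
    C(Cyl f, Z) where
  toFun := Quot.lift (Sum.elim φ ψ) (by rintro _ _ ⟨x, rfl, rfl⟩; exact h x)
  continuous_toFun := continuous_quot_lift _ (φ.continuous.sumElim ψ.continuous)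

def collapse (f : X → Y) (hf : Continuous f) : C(Cyl f, Y) :=
  desc f ⟨fun p => f p.1, hf.comp continuous_fst⟩ (ContinuousMap.id Y) fun _ => rfl

def descHomotopy {f : C(X, Y)} {g : C(Y, Z)} {k : C(X, Z)} (L : (g.comp f).Homotopy k) :
    C(Cyl f, Z) :=
  desc f (L.toContinuousMap.comp ⟨Prod.swap, continuous_swap⟩) g L.apply_zero

lemma descHomotopy_comp_top {f : C(X, Y)} {g : C(Y, Z)} {k : C(X, Z)}
    (L : (g.comp f).Homotopy k) : (descHomotopy L).comp (top f) = k :=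
  ext L.apply_one

lemma descHomotopy_comp_base {f : C(X, Y)} {g : C(Y, Z)} {k : C(X, Z)}
    (L : (g.comp f).Homotopy k) : (descHomotopy L).comp (base f) = g :=
  rfl

def slide (f : X → Y) : C(Cyl f, C(I, Cyl f)) :=
  desc f
    (curry ⟨fun p => cylQ f (.inl (p.1.1, p.1.2 * σ p.2)),
      continuous_quot_mk.comp (continuous_inl.comp ((continuous_fst.comp continuous_fst).prodMk
        ((continuous_snd.comp continuous_fst).mul (continuous_symm.comp continuous_snd))))⟩)
    (curry ⟨fun p => cylQ f (.inr p.1),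
      continuous_quot_mk.comp (continuous_inr.comp continuous_fst)⟩)
    fun x => ContinuousMap.ext fun t => by
      change cylQ f (.inl (x, 0 * σ t)) = cylQ f (.inr (f x))
      rw [zero_mul, cylQ_inl_zero]

lemma slide_inl (f : X → Y) (x : X) (s t : I) :
    slide f (cylQ f (.inl (x, s))) t = cylQ f (.inl (x, s * σ t)) :=
  rfl

lemma homotopic_id_base_comp_collapse (f : X → Y) (hf : Continuous f) :
    (ContinuousMap.id (Cyl f)).Homotopic ((base f).comp (collapse f hf)) :=
  ⟨{ toFun := fun p => slide f p.2 p.1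
     continuous_toFun := (continuous_uncurry_of_continuous (slide f)).comp continuous_swap
     map_zero_left := by
       intro p
       induction p using Cyl.ind with
       | inl x s => rw [id_apply, slide_inl, symm_zero, mul_one]
       | inr y => rfl
     map_one_left := by
       intro p
       induction p using Cyl.ind with
       | inl x s =>
         rw [slide_inl, symm_one, mul_zero, cylQ_inl_zero]
         rfl
       | inr y => rfl }⟩

lemma homotopic_base_comp_top (f : C(X, Y)) : ((base f).comp f).Homotopic (top f) :=
  ⟨{ toFun := fun p => cylQ f (.inl (p.2, p.1))
     continuous_toFun :=
       continuous_quot_mk.comp (continuous_inl.comp (continuous_snd.prodMk continuous_fst))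
     map_zero_left := fun x => cylQ_inl_zero f x
     map_one_left := fun _ => rfl }⟩

lemma homotopic_id_top_comp_descHomotopy (f : C(X, Y)) {g : C(Y, X)}
    (K : (f.comp g).Homotopic (ContinuousMap.id Y))
    (L : (g.comp f).Homotopy (ContinuousMap.id X)) :
    (ContinuousMap.id (Cyl f)).Homotopic ((top f).comp (descHomotopy L)) := by
  set c := collapse f f.continuous
  set r := descHomotopy L
  have slide_to_base := homotopic_id_base_comp_collapse f f.continuous
  have via_fg : ((base f).comp c).Homotopic (((base f).comp f).comp (g.comp c)) :=
    (Homotopic.refl (base f)).comp (K.symm.comp (Homotopic.refl c))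
  have lift_to_top : (((base f).comp f).comp (g.comp c)).Homotopic ((top f).comp (g.comp c)) :=
    (homotopic_base_comp_top f).comp (Homotopic.refl _)
  have g_comp_collapse : (g.comp c).Homotopic r := by
    have := (Homotopic.refl r).comp slide_to_base.symm
    rwa [← comp_assoc, descHomotopy_comp_base, comp_id] at this
  exact slide_to_base.trans (via_fg.trans (lift_to_top.trans
    ((Homotopic.refl (top f)).comp g_comp_collapse)))

end Cyl

lemma exists_deformation_retraction_of_homotopic {A Z : Type*} [TopologicalSpace A]
    [TopologicalSpace Z] (i : C(A, Z)) (r : C(Z, A)) (hri : r.comp i = ContinuousMap.id A)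
    (h : (ContinuousMap.id Z).Homotopic (i.comp r)) :
    ∃ H : C(Z × I, Z), (∀ p, H (p, 0) = p) ∧ (∀ p, H (p, 1) ∈ Set.range i) ∧
      ∀ p ∈ Set.range i, H (p, 1) = p := by
  obtain ⟨F⟩ := h
  refine ⟨F.toContinuousMap.comp ⟨Prod.swap, continuous_swap⟩, F.apply_zero,
    fun p => ⟨r p, (F.apply_one p).symm⟩, ?_⟩
  rintro _ ⟨a, rfl⟩
  change F (1, i a) = i a
  rw [F.apply_one, comp_apply, ← comp_apply r i, hri, id_apply]

/-- if `f` is a homotopy equivalence, the top `X̃ = q(X × {1})`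
of the mapping cylinder is a deformation retract of `M_f` (not necessarily strong). -/
theorem top_deformation_retract {X Y : Type*} [TopologicalSpace X] [TopologicalSpace Y]
    (f : X → Y) (hf : Continuous f)
    (hfe : ∃ g : C(Y, X), ((⟨f, hf⟩ : C(X, Y)).comp g).Homotopic (ContinuousMap.id Y) ∧
      (g.comp ⟨f, hf⟩).Homotopic (ContinuousMap.id X)) :
    ∃ H : C(Cyl f × I, Cyl f),
      (∀ p : Cyl f, H (p, 0) = p) ∧
      (∀ p : Cyl f, H (p, 1) ∈ Set.range fun x : X => cylQ f (Sum.inl (x, 1))) ∧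
      (∀ p ∈ Set.range fun x : X => cylQ f (Sum.inl (x, 1)), H (p, 1) = p) := by
  obtain ⟨g, hK, ⟨L⟩⟩ := hfe
  exact exists_deformation_retraction_of_homotopic (Cyl.top f) (Cyl.descHomotopy L)
    (Cyl.descHomotopy_comp_top L) (Cyl.homotopic_id_top_comp_descHomotopy ⟨f, hf⟩ hK L)
end
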